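/- arXiv:2302.14806 — 5 statements merged into one kernel-verified Lean document; each statement's English description precedes it below -/
import Mathlib

section
/- For any matrix X in R^{n×d} and weight matrix W in R^{d×d}, the Dirichlet energy E(XW) = tr((XW)^T L̃ (XW)) satisfies E(XW) ≤ μ_max² E(X), where μ_max is the largest singular value of W and L̃ is a symmetric positive semi-definite matrix. -/
/-!
Factor `L̃ = Bᵀ B`, so that `E(Y) = tr((BY)ᵀ(BY))` is the sum of the squared norms of the rows
of `BY`. The rows of `B(XW)` are the rows of `BX` multiplied on the right by `W`, each of which
is stretched by a factor at most `μ_max`.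
-/

open Matrix BigOperators

namespace Matrix

variable {m n o : Type*} [Fintype m] [Fintype n]

theorem trace_transpose_mul_self {R : Type*} [AddCommMonoid R] [Mul R] (A : Matrix m n R) :
    (Aᵀ * A).trace = ∑ i, A i ⬝ᵥ A i := by
  simp only [trace, diag, mul_apply, transpose_apply, dotProduct]
  exact Finset.sum_comm

open scoped MatrixOrder in
theorem PosSemidef.exists_eq_transpose_mul_self {L : Matrix n n ℝ}
    (hL : L.PosSemidef) : ∃ B : Matrix n n ℝ, L = Bᵀ * B := by
  classical
  have hsymm : (CFC.sqrt L)ᵀ = CFC.sqrt L := (CFC.sqrt_nonneg L).posSemidef.1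
  exact ⟨CFC.sqrt L, by rw [hsymm, CFC.sqrt_mul_sqrt_self L hL.nonneg]⟩

theorem trace_transpose_mul_self_mul_le {W : Matrix n o ℝ} [Fintype o] {μ : ℝ}
    (hμ : ∀ v : n → ℝ, v ᵥ* W ⬝ᵥ v ᵥ* W ≤ μ ^ 2 * (v ⬝ᵥ v)) (A : Matrix m n ℝ) :
    ((A * W)ᵀ * (A * W)).trace ≤ μ ^ 2 * (Aᵀ * A).trace := by
  simp only [trace_transpose_mul_self, Finset.mul_sum, mul_apply_eq_vecMul]
  exact Finset.sum_le_sum fun i _ ↦ hμ (A i)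

end Matrix

/-- Dirichlet energy bound under right-multiplication by a weight matrix:
`E(XW) ≤ μ_max² E(X)` where `μ_max` is the largest singular value of `W`
(encoded by the operator-norm bound `‖vW‖² ≤ μ_max²‖v‖²` for all rows `v`)
and `L̃` is symmetric positive semi-definite. -/
theorem stmt_0 (n d : ℕ) (L : Matrix (Fin n) (Fin n) ℝ) (hL : L.PosSemidef)
    (X : Matrix (Fin n) (Fin d) ℝ) (W : Matrix (Fin d) (Fin d) ℝ) (μmax : ℝ)
    (hμ : ∀ v : Fin d → ℝ,
      (Matrix.vecMul v W) ⬝ᵥ (Matrix.vecMul v W) ≤ μmax ^ 2 * (v ⬝ᵥ v)) :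
    ((X * W)ᵀ * L * (X * W)).trace ≤ μmax ^ 2 * (Xᵀ * L * X).trace := by
  obtain ⟨B, rfl⟩ := hL.exists_eq_transpose_mul_self
  have energy_eq : ∀ Y : Matrix (Fin n) (Fin d) ℝ, Yᵀ * (Bᵀ * B) * Y = (B * Y)ᵀ * (B * Y) :=
    fun Y ↦ by simp only [transpose_mul, Matrix.mul_assoc]
  rw [energy_eq, energy_eq, ← Matrix.mul_assoc B X W]
  exact trace_transpose_mul_self_mul_le hμ (B * X)
end

section
/- For the componentwise ReLU activation σ(x) = max(x,0) applied entrywise to X ∈ R^{n×d}, the Dirichlet energy of the normalized graph Laplacian satisfies E(σ(X)) ≤ E(X). -/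
open Matrix BigOperators

/-- For entrywise ReLU `σ(x) = max(x,0)`, the Dirichlet energy of the normalized
graph Laplacian satisfies `E(σ(X)) ≤ E(X)`, where
`E(X) = (1/2) Σ_{i,j} A_{ij} ‖X_i/√(1+d_i) − X_j/√(1+d_j)‖²`. -/
theorem stmt_1 (n d : ℕ) (A : Matrix (Fin n) (Fin n) ℝ)
    (hsym : A.IsSymm) (hnn : ∀ i j, 0 ≤ A i j)
    (deg : Fin n → ℝ) (hdeg : ∀ i, deg i = ∑ j, A i j)
    (E : Matrix (Fin n) (Fin d) ℝ → ℝ)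
    (hE : ∀ X, E X = (1 / 2) * ∑ i, ∑ j, A i j *
      ∑ k, (X i k / Real.sqrt (1 + deg i) - X j k / Real.sqrt (1 + deg j)) ^ 2)
    (X : Matrix (Fin n) (Fin d) ℝ) :
    E (Matrix.of fun i k => max (X i k) 0) ≤ E X := by
  have key : ∀ a b : ℝ, (max a 0 - max b 0) ^ 2 ≤ (a - b) ^ 2 := by
    intro a b
    rw [← sq_abs (max a 0 - max b 0), ← sq_abs (a - b)]
    exact pow_le_pow_left₀ (abs_nonneg _) (abs_max_sub_max_le_abs a b 0) 2
  rw [hE, hE]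
  apply mul_le_mul_of_nonneg_left _ (by norm_num : (0:ℝ) ≤ 1/2)
  refine Finset.sum_le_sum fun i _ => Finset.sum_le_sum fun j _ => ?_
  refine mul_le_mul_of_nonneg_left (Finset.sum_le_sum fun k _ => ?_) (hnn i j)
  · simp only [Matrix.of_apply]
    have hsi : (0:ℝ) ≤ Real.sqrt (1 + deg i) := Real.sqrt_nonneg _
    have hsj : (0:ℝ) ≤ Real.sqrt (1 + deg j) := Real.sqrt_nonneg _
    have h1 : max (X i k) 0 / Real.sqrt (1 + deg i)
        = max (X i k / Real.sqrt (1 + deg i)) 0 := by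
      rw [← max_div_div_right hsi (X i k) 0, zero_div]
    have h2 : max (X j k) 0 / Real.sqrt (1 + deg j)
        = max (X j k / Real.sqrt (1 + deg j)) 0 := by
      rw [← max_div_div_right hsj (X j k) 0, zero_div]
    rw [h1, h2]
    exact key _ _
end

section
/- Suppose for every eigenvalue λ_ℓ of the normalized graph Laplacian L̃ the scaling functions satisfy |α̂(λ_ℓ/2^J)|² + Σ_{r=1}^K |β̂^{(r)}(λ_ℓ/2^J)|² = 1 and |α̂(λ_ℓ/2^{l+1})|² = |α̂(λ_ℓ/2^l)|² + Σ_{r=1}^K |β̂^{(r)}(λ_ℓ/2^l)|² for l = 1,…,J−1. Then the undecimated framelet system {φ_{1,p}} ∪ {ψ^{(r)}_{l,p}} is a tight frame: ‖f‖² = Σ_p |⟨f, φ_{1,p}⟩|² + Σ_{l=1}^J Σ_{r=1}^K Σ_p |⟨f, ψ^{(r)}_{l,p}⟩|² for every f ∈ l₂(G). -/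
/-! Each framelet family is the kernel of a spectral multiplier, so its squared coefficients
against `f` are the spectral coefficients `⟪f, u ℓ⟫²` weighted by the squared multiplier.
Summing over all families, the weight at `λ_ℓ` telescopes through the two-scale relations to
`1`, and Parseval for the orthonormal eigenbasis finishes the proof. -/

open scoped RealInnerProductSpace

theorem Orthonormal.sum_sq_inner_left_of_card_eq_finrank {ι E : Type*} [Fintype ι]
    [NormedAddCommGroup E] [InnerProductSpace ℝ E] [FiniteDimensional ℝ E] {u : ι → E}
    (hu : Orthonormal ℝ u) (hcard : Fintype.card ι = Module.finrank ℝ E) (f : E) :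
    ∑ i, ⟪f, u i⟫ ^ 2 = ‖f‖ ^ 2 := by
  simpa using (OrthonormalBasis.mk hu
    (hu.linearIndependent.span_eq_top_of_card_eq_finrank' hcard).ge).sum_sq_inner_left f

theorem Orthonormal.sum_sq_inner_multiplier_kernel {ι n : Type*} [Fintype ι] [Fintype n]
    {u : ι → EuclideanSpace ℝ n} (hu : Orthonormal ℝ u) (g : ι → ℝ) (w : n → EuclideanSpace ℝ n)
    (hw : ∀ p v, w p v = ∑ ℓ, g ℓ * u ℓ p * u ℓ v) (f : EuclideanSpace ℝ n) :
    ∑ p, ⟪f, w p⟫ ^ 2 = ∑ ℓ, g ℓ ^ 2 * ⟪f, u ℓ⟫ ^ 2 := by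
  set x : EuclideanSpace ℝ n := ∑ ℓ, (g ℓ * ⟪f, u ℓ⟫) • u ℓ
  have hw_sum : ∀ p, w p = ∑ ℓ, (g ℓ * u ℓ p) • u ℓ := fun p => by
    ext v
    simp [hw]
  have hinner : ∀ p, ⟪f, w p⟫ = x p := fun p => by
    simp only [x, hw_sum, inner_sum, inner_smul_right, WithLp.ofLp_sum, WithLp.ofLp_smul,
      Finset.sum_apply, Pi.smul_apply, smul_eq_mul]
    exact Finset.sum_congr rfl fun ℓ _ => by ring
  calc ∑ p, ⟪f, w p⟫ ^ 2 = ‖x‖ ^ 2 := by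
        simp only [hinner, EuclideanSpace.real_norm_sq_eq]
    _ = ⟪x, x⟫ := (real_inner_self_eq_norm_sq x).symm
    _ = ∑ ℓ, g ℓ ^ 2 * ⟪f, u ℓ⟫ ^ 2 := by
        rw [hu.inner_sum]
        exact Finset.sum_congr rfl fun ℓ _ => by simp only [conj_trivial]; ring

theorem add_sum_Icc_eq_of_two_scale {G : Type*} [AddCommGroup G] {a b : ℕ → G} {J : ℕ}
    (hJ : 1 ≤ J) (h2scale : ∀ l ∈ Finset.Icc 1 (J - 1), a (l + 1) = a l + b l) :
    a 1 + ∑ l ∈ Finset.Icc 1 J, b l = a J + b J := by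
  have htelescope : ∑ l ∈ Finset.Ico 1 J, b l = a J - a 1 := by
    rw [← Finset.sum_Ico_sub a hJ]
    refine Finset.sum_congr rfl fun l hl => ?_
    rw [h2scale l (by simp only [Finset.mem_Icc, Finset.mem_Ico] at hl ⊢; omega)]
    abel
  rw [← Finset.Ico_add_one_right_eq_Icc, Finset.sum_Ico_succ_top hJ, htelescope]
  abel

/-- Partition-of-unity conditions on the spectrum imply the undecimated framelet
system `{φ_{1,p}} ∪ {ψ^{(r)}_{l,p}}` is a tight frame:
`‖f‖² = Σ_p |⟨f,φ_{1,p}⟩|² + Σ_{l=1}^J Σ_r Σ_p |⟨f,ψ^{(r)}_{l,p}⟩|²`. -/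
theorem stmt_7 (N K J : ℕ) (hJ : 1 ≤ J)
    (u : Fin N → EuclideanSpace ℝ (Fin N)) (hu : Orthonormal ℝ u)
    (lam : Fin N → ℝ) (αhat : ℝ → ℝ) (βhat : Fin K → ℝ → ℝ)
    (φ : ℕ → Fin N → EuclideanSpace ℝ (Fin N))
    (hφ : ∀ l p v, φ l p v = ∑ ℓ, αhat (lam ℓ / 2 ^ l) * u ℓ p * u ℓ v)
    (ψ : Fin K → ℕ → Fin N → EuclideanSpace ℝ (Fin N))
    (hψ : ∀ r l p v, ψ r l p v = ∑ ℓ, βhat r (lam ℓ / 2 ^ l) * u ℓ p * u ℓ v)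
    (hnorm : ∀ ℓ, αhat (lam ℓ / 2 ^ J) ^ 2 + ∑ r, βhat r (lam ℓ / 2 ^ J) ^ 2 = 1)
    (h2scale : ∀ ℓ, ∀ l ∈ Finset.Icc 1 (J - 1),
      αhat (lam ℓ / 2 ^ (l + 1)) ^ 2 =
        αhat (lam ℓ / 2 ^ l) ^ 2 + ∑ r, βhat r (lam ℓ / 2 ^ l) ^ 2) :
    ∀ f : EuclideanSpace ℝ (Fin N),
      ‖f‖ ^ 2 = (∑ p, (inner ℝ f (φ 1 p) : ℝ) ^ 2) +
        ∑ l ∈ Finset.Icc 1 J, ∑ r, ∑ p, (inner ℝ f (ψ r l p) : ℝ) ^ 2 := by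
  intro f
  have hunit : ∀ ℓ, αhat (lam ℓ / 2 ^ 1) ^ 2
      + ∑ l ∈ Finset.Icc 1 J, ∑ r, βhat r (lam ℓ / 2 ^ l) ^ 2 = 1 := fun ℓ =>
    (add_sum_Icc_eq_of_two_scale (a := fun l => αhat (lam ℓ / 2 ^ l) ^ 2)
      (b := fun l => ∑ r, βhat r (lam ℓ / 2 ^ l) ^ 2) hJ (h2scale ℓ)).trans (hnorm ℓ)
  have hcard : Fintype.card (Fin N) = Module.finrank ℝ (EuclideanSpace ℝ (Fin N)) := by simp
  simp_rw [hu.sum_sq_inner_multiplier_kernel _ (φ 1) (hφ 1) f,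
    hu.sum_sq_inner_multiplier_kernel _ (ψ _ _) (hψ _ _) f]
  calc ‖f‖ ^ 2 = ∑ ℓ, (αhat (lam ℓ / 2 ^ 1) ^ 2
        + ∑ l ∈ Finset.Icc 1 J, ∑ r, βhat r (lam ℓ / 2 ^ l) ^ 2) * ⟪f, u ℓ⟫ ^ 2 := by
        simp only [hunit, one_mul, hu.sum_sq_inner_left_of_card_eq_finrank hcard]
    _ = _ := by
        simp only [add_mul, Finset.sum_mul, Finset.sum_add_distrib]
        congr 1
        rw [Finset.sum_comm]
        exact Finset.sum_congr rfl fun l _ => Finset.sum_comm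
end

section
/- (High-pass framelet coefficient bound) For the high-pass framelet transforms at level l, ‖Σ_{r=1}^K W_{r,l} X‖² ≤ C² λ_max 2^{−(l+1)} ‖X‖² for some constant C depending only on the scaling function α̂, where λ_max is the largest eigenvalue of the graph Laplacian; i.e. the energy of high-pass coefficients decays geometrically with the level l. -/
/-!
Diagonalising in the orthonormal eigenbasis, `∑ r, W_{r,l}` acts on the `ℓ`-th coefficient of
`Uᵀ X` by `D ℓ = ∑ r, β̂_r(λ_ℓ / 2^l)`, and Parseval reduces the claim to a uniform bound on
`(D ℓ)²`. Cauchy–Schwarz gives `(D ℓ)² ≤ K ∑ r, β̂_r(λ_ℓ / 2^l)²`, which by the two-scale relation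
is `K (α̂(s/2)² - α̂(s)²)` with `s = λ_ℓ / 2^l`. Since `α̂²` is `C¹`, it is Lipschitz on
`[0, λ_max]`, so this difference is at most `K · Lip · s/2 ≤ K · Lip · λ_max / 2^(l+1)`.
-/

open Matrix BigOperators

lemma sum_diagonal {m ι α : Type*} [DecidableEq m] [AddCommMonoid α] (s : Finset ι)
    (f : ι → m → α) : ∑ r ∈ s, diagonal (f r) = diagonal fun i ↦ ∑ r ∈ s, f r i := by
  ext i j
  by_cases h : i = j <;> simp [Matrix.sum_apply, h]

section FrobeniusSum

variable {m n : Type*} [Fintype m] [Fintype n]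

lemma sum_sum_sq_eq_trace_transpose_mul (A : Matrix m n ℝ) :
    ∑ i, ∑ j, A i j ^ 2 = trace (Aᵀ * A) := by
  simp only [trace, mul_apply, transpose_apply, diag_apply, sq]
  rw [Finset.sum_comm]

lemma sum_sum_sq_orthogonal_mul [DecidableEq m] {U : Matrix m m ℝ} (hU : Uᵀ * U = 1)
    (Z : Matrix m n ℝ) :
    ∑ i, ∑ j, (U * Z) i j ^ 2 = ∑ i, ∑ j, Z i j ^ 2 := by
  rw [sum_sum_sq_eq_trace_transpose_mul, sum_sum_sq_eq_trace_transpose_mul, transpose_mul,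
    Matrix.mul_assoc, ← Matrix.mul_assoc Uᵀ, hU, Matrix.one_mul]

lemma sum_sum_sq_diagonal_mul_le [DecidableEq m] {D : m → ℝ} {c : ℝ} (hD : ∀ i, D i ^ 2 ≤ c)
    (Y : Matrix m n ℝ) :
    ∑ i, ∑ j, (diagonal D * Y) i j ^ 2 ≤ c * ∑ i, ∑ j, Y i j ^ 2 := by
  simp only [diagonal_mul, mul_pow, ← Finset.mul_sum]
  rw [Finset.mul_sum]
  gcongr with i
  exact hD i

lemma sum_sum_sq_spectral_mul_le [DecidableEq m] {U : Matrix m m ℝ}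
    (hU : U * Uᵀ = 1 ∧ Uᵀ * U = 1) {D : m → ℝ} {c : ℝ} (hD : ∀ i, D i ^ 2 ≤ c)
    (X : Matrix m n ℝ) :
    ∑ i, ∑ j, (U * diagonal D * Uᵀ * X) i j ^ 2 ≤ c * ∑ i, ∑ j, X i j ^ 2 := by
  have hUt : Uᵀᵀ * Uᵀ = 1 := by rw [transpose_transpose, hU.1]
  rw [Matrix.mul_assoc, Matrix.mul_assoc, sum_sum_sq_orthogonal_mul hU.2,
    ← sum_sum_sq_orthogonal_mul hUt X]
  exact sum_sum_sq_diagonal_mul_le hD _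

end FrobeniusSum

lemma ContDiff.exists_lipschitzOnWith_sq_Icc {f : ℝ → ℝ} (hf : ContDiff ℝ 1 f) (a b : ℝ) :
    ∃ L, LipschitzOnWith L (fun t ↦ f t ^ 2) (Set.Icc a b) :=
  ((hf.pow 2).locallyLipschitz.locallyLipschitzOn).exists_lipschitzOnWith_of_compact isCompact_Icc

lemma LipschitzOnWith.sub_half_le {g : ℝ → ℝ} {L : NNReal} {b s : ℝ}
    (hg : LipschitzOnWith L g (Set.Icc 0 b)) (hs : s ∈ Set.Icc 0 b) :
    g (s / 2) - g s ≤ L * (s / 2) := by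
  have hhalf : s / 2 ∈ Set.Icc 0 b := ⟨by linarith [hs.1], by linarith [hs.1, hs.2]⟩
  calc g (s / 2) - g s ≤ |g (s / 2) - g s| := le_abs_self _
    _ ≤ L * |s / 2 - s| := by simpa only [Real.dist_eq] using hg.dist_le_mul _ hhalf _ hs
    _ = L * (s / 2) := by rw [abs_of_nonpos (by linarith [hs.1])]; ring

lemma div_two_pow_mem_Icc {t b : ℝ} (ht : t ∈ Set.Icc 0 b) (l : ℕ) :
    t / 2 ^ l ∈ Set.Icc 0 b :=
  ⟨by positivity [ht.1], (div_le_self ht.1 (one_le_pow₀ one_le_two)).trans ht.2⟩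

theorem stmt_14_general (N d K : ℕ)
    (U : Matrix (Fin N) (Fin N) ℝ) (hU : U * Uᵀ = 1 ∧ Uᵀ * U = 1)
    (lam : Fin N → ℝ) (hlamnn : ∀ ℓ, 0 ≤ lam ℓ)
    (lammax : ℝ) (hlammax : ∀ ℓ, lam ℓ ≤ lammax)
    (αhat : ℝ → ℝ) (hαsmooth : ContDiff ℝ 1 αhat)
    (βhat : Fin K → ℝ → ℝ)
    (h2scale : ∀ (ℓ : Fin N) (l : ℕ), 1 ≤ l →
      ∑ r, βhat r (lam ℓ / 2 ^ l) ^ 2 =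
        αhat (lam ℓ / 2 ^ (l + 1)) ^ 2 - αhat (lam ℓ / 2 ^ l) ^ 2)
    (Whigh : Fin K → ℕ → Matrix (Fin N) (Fin N) ℝ)
    (hWhigh : ∀ r l, Whigh r l =
      U * Matrix.diagonal (fun ℓ => βhat r (lam ℓ / 2 ^ l)) * Uᵀ) :
    ∃ C : ℝ, ∀ l : ℕ, 1 ≤ l → ∀ X : Matrix (Fin N) (Fin d) ℝ,
      (∑ i, ∑ j, ((∑ r, Whigh r l * X) i j) ^ 2) ≤
        C ^ 2 * lammax / 2 ^ (l + 1) * ∑ i, ∑ j, (X i j) ^ 2 := by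
  obtain ⟨L, hL⟩ := hαsmooth.exists_lipschitzOnWith_sq_Icc 0 lammax
  refine ⟨Real.sqrt (K * L), fun l hl X ↦ ?_⟩
  rw [Real.sq_sqrt (by positivity)]
  simp only [hWhigh]
  rw [← Matrix.sum_mul, ← Matrix.sum_mul, ← Matrix.mul_sum, sum_diagonal]
  refine sum_sum_sq_spectral_mul_le hU (fun ℓ ↦ ?_) X
  have hlam : lam ℓ ∈ Set.Icc 0 lammax := ⟨hlamnn ℓ, hlammax ℓ⟩
  have hhalf : lam ℓ / 2 ^ (l + 1) = lam ℓ / 2 ^ l / 2 := by rw [pow_succ, div_div]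
  calc (∑ r, βhat r (lam ℓ / 2 ^ l)) ^ 2
      ≤ K * ∑ r, βhat r (lam ℓ / 2 ^ l) ^ 2 := by
        simpa using sq_sum_le_card_mul_sum_sq (s := Finset.univ) (f := fun r ↦ βhat r _)
    _ ≤ K * (L * (lam ℓ / 2 ^ (l + 1))) := by
        rw [h2scale ℓ l hl, hhalf]
        gcongr
        exact hL.sub_half_le (div_two_pow_mem_Icc hlam l)
    _ ≤ K * L * lammax / 2 ^ (l + 1) := by
        rw [← mul_assoc, mul_div_assoc]
        gcongr
        exact hlammax ℓ

/-- High-pass framelet coefficient bound: there is a constant `C` (depending only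
on the scaling function `α̂`) such that for every level `l ≥ 1` and signal `X`,
`‖Σ_{r=1}^K W_{r,l} X‖² ≤ C² λ_max 2^{−(l+1)} ‖X‖²` (Frobenius norms), i.e. the
energy of the high-pass coefficients decays geometrically in `l`. -/
theorem stmt_14 (N d K : ℕ)
    (U : Matrix (Fin N) (Fin N) ℝ) (hU : U * Uᵀ = 1 ∧ Uᵀ * U = 1)
    (lam : Fin N → ℝ) (hlamnn : ∀ ℓ, 0 ≤ lam ℓ)
    (lammax : ℝ) (hlammax : ∀ ℓ, lam ℓ ≤ lammax)
    (αhat : ℝ → ℝ) (hαsmooth : ContDiff ℝ 1 αhat) (hα0 : αhat 0 = 1)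
    (βhat : Fin K → ℝ → ℝ)
    (h2scale : ∀ (ℓ : Fin N) (l : ℕ), 1 ≤ l →
      ∑ r, βhat r (lam ℓ / 2 ^ l) ^ 2 =
        αhat (lam ℓ / 2 ^ (l + 1)) ^ 2 - αhat (lam ℓ / 2 ^ l) ^ 2)
    (Whigh : Fin K → ℕ → Matrix (Fin N) (Fin N) ℝ)
    (hWhigh : ∀ r l, Whigh r l =
      U * Matrix.diagonal (fun ℓ => βhat r (lam ℓ / 2 ^ l)) * Uᵀ) :
    ∃ C : ℝ, ∀ l : ℕ, 1 ≤ l → ∀ X : Matrix (Fin N) (Fin d) ℝ,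
      (∑ i, ∑ j, ((∑ r, Whigh r l * X) i j) ^ 2) ≤
        C ^ 2 * lammax / 2 ^ (l + 1) * ∑ i, ∑ j, (X i j) ^ 2 :=
  stmt_14_general N d K U hU lam hlamnn lammax hlammax αhat hαsmooth βhat h2scale Whigh hWhigh
end

section
/- (Stability of framelet message passing) Suppose the update X^{(t)} = X^{(t−1)} + σ(Σ_{r=1}^K Σ_{l=1}^J W_{r,l} X^{(t−1)} Θ_r + W_{0,J} X^{(t−1)} Θ_0) has ‖Θ_r‖ ≤ C_r for all r, where σ is 1-Lipschitz with σ(0)=0 (e.g. entrywise ReLU). Then ‖X^{(t)} − X̃^{(t)}‖ ≤ C^t ‖X^{(0)} − X̃^{(0)}‖ with C = 1 + 4 C₁ √λ_max · max_{r=0,…,K} C_r, for any two input features X^{(0)}, X̃^{(0)} evolved under the same network. -/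
/-!
A layer is `Y ↦ Y + σ(T Y)` with `T` linear. The high passes contribute at most
`c ∑_{l ≥ 1} 2^{-(l+1)/2} ≤ 2c` and the low pass at most `c`, so `‖T Y‖ ≤ 3c‖Y‖`
(`c = C₁ C_m √λ_max`); an entrywise 1-Lipschitz `σ` is 1-Lipschitz for the Frobenius norm,
so each layer is `(1 + 4c)`-Lipschitz and `t` layers give the factor `(1 + 4c)^t`.
-/

open Finset
open scoped NNReal

attribute [local instance] Matrix.frobeniusSeminormedAddCommGroup
  Matrix.frobeniusNormedAddCommGroup Matrix.frobeniusNormedSpace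

namespace Matrix

variable {m n : Type*} [Fintype m] [Fintype n]

theorem frobenius_norm_eq_sqrt (A : Matrix m n ℝ) : ‖A‖ = √(∑ i, ∑ j, A i j ^ 2) := by
  simp [frobenius_norm_def, Real.sqrt_eq_rpow]

theorem frobenius_norm_le_of_forall_norm_le {α β : Type*} [SeminormedAddCommGroup α]
    [SeminormedAddCommGroup β] {A : Matrix m n α} {B : Matrix m n β}
    (h : ∀ i j, ‖A i j‖ ≤ ‖B i j‖) : ‖A‖ ≤ ‖B‖ := by
  simp only [frobenius_norm_def]
  gcongr with i _ j _
  exact h i j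

theorem frobenius_norm_map_sub_map_le {σ : ℝ → ℝ} {K : ℝ≥0} (hσ : LipschitzWith K σ)
    (A B : Matrix m n ℝ) : ‖A.map σ - B.map σ‖ ≤ K * ‖A - B‖ := by
  rw [← Real.norm_of_nonneg K.coe_nonneg, ← norm_smul]
  refine frobenius_norm_le_of_forall_norm_le fun i j => ?_
  simpa [norm_mul, ← Real.dist_eq] using hσ.dist_le_mul (A i j) (B i j)

end Matrix

theorem sum_Icc_inv_sqrt_two_pow_succ_le_two (J : ℕ) :
    ∑ l ∈ Icc 1 J, (√(2 ^ (l + 1)))⁻¹ ≤ 2 := by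
  set x : ℝ := (√2)⁻¹
  have hx : x ^ 2 = 1 / 2 := by simp [x, inv_pow]
  have hx34 : x ≤ 3 / 4 := by
    rw [inv_le_comm₀ (by positivity) (by norm_num), Real.le_sqrt (by norm_num) (by norm_num)]
    norm_num
  have hterm : ∀ l : ℕ, (√(2 ^ (l + 1)))⁻¹ = x ^ (l + 1) := fun l => by
    rw [inv_pow, _root_.inv_inj, Real.sqrt_eq_iff_eq_sq (by positivity) (by positivity), ← pow_mul,
      mul_comm, pow_mul, Real.sq_sqrt zero_le_two]
  calc ∑ l ∈ Icc 1 J, (√(2 ^ (l + 1)))⁻¹ = ∑ i ∈ Ico 2 (J + 2), x ^ i := by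
        simp_rw [hterm]
        exact sum_Ico_add' (x ^ ·) 1 (J + 1) 1
    _ ≤ x ^ 2 / (1 - x) := geom_sum_Ico_le_of_lt_one (by positivity) (by linarith)
    _ ≤ 2 := by
        rw [hx, div_le_iff₀ (by linarith)]
        linarith

theorem norm_sum_Icc_add_le_three_mul {E : Type*} [SeminormedAddCommGroup E] {J : ℕ}
    {h : ℕ → E} {g : E} {c a : ℝ}
    (hh : ∀ l, 1 ≤ l → ‖h l‖ ≤ c / √(2 ^ (l + 1)) * a) (hg : ‖g‖ ≤ c * a) :
    ‖∑ l ∈ Icc 1 J, h l + g‖ ≤ 3 * (c * a) := by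
  have hca : 0 ≤ c * a := (norm_nonneg g).trans hg
  calc ‖∑ l ∈ Icc 1 J, h l + g‖ ≤ ∑ l ∈ Icc 1 J, ‖h l‖ + ‖g‖ :=
        (norm_add_le _ _).trans (by gcongr; exact norm_sum_le _ _)
    _ ≤ ∑ l ∈ Icc 1 J, c * a * (√(2 ^ (l + 1)))⁻¹ + c * a := by
        gcongr with l hl
        simpa only [div_eq_mul_inv, mul_right_comm] using hh l (mem_Icc.mp hl).1
    _ = c * a * ∑ l ∈ Icc 1 J, (√(2 ^ (l + 1)))⁻¹ + c * a := by rw [mul_sum]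
    _ ≤ c * a * 2 + c * a := by gcongr; exact sum_Icc_inv_sqrt_two_pow_succ_le_two J
    _ = 3 * (c * a) := by ring

theorem norm_sub_le_pow_mul_of_add_lipschitz {E : Type*} [NormedAddCommGroup E] {F : E → E}
    {K : ℝ} (hF : ∀ a b, ‖F a - F b‖ ≤ K * ‖a - b‖) {x y : ℕ → E}
    (hx : ∀ t, x (t + 1) = x t + F (x t)) (hy : ∀ t, y (t + 1) = y t + F (y t)) (t : ℕ) :
    ‖x t - y t‖ ≤ (1 + K) ^ t * ‖x 0 - y 0‖ := by
  rcases lt_or_ge K 0 with hK | hK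
  · -- a negative Lipschitz constant is only possible on the trivial group
    have hE (a b : E) : a = b := by
      have hKab : 0 ≤ K * ‖a - b‖ := (norm_nonneg _).trans (hF a b)
      rw [← sub_eq_zero, ← norm_le_zero_iff]
      nlinarith [norm_nonneg (a - b)]
    simp [hE (x t) (y t), hE (x 0) (y 0)]
  induction t with
  | zero => simp
  | succ t ih =>
    calc ‖x (t + 1) - y (t + 1)‖ = ‖(x t - y t) + (F (x t) - F (y t))‖ := by
          rw [hx, hy, add_sub_add_comm]
      _ ≤ (1 + K) * ‖x t - y t‖ := by
          linarith [norm_add_le (x t - y t) (F (x t) - F (y t)), hF (x t) (y t)]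
      _ ≤ (1 + K) * ((1 + K) ^ t * ‖x 0 - y 0‖) := by gcongr
      _ = (1 + K) ^ (t + 1) * ‖x 0 - y 0‖ := by ring

theorem stmt_15_general (N d K J : ℕ)
    (nrm : Matrix (Fin N) (Fin d) ℝ → ℝ)
    (hnrm : ∀ Y, nrm Y = Real.sqrt (∑ i, ∑ j, (Y i j) ^ 2))
    (W : Fin K → ℕ → Matrix (Fin N) (Fin N) ℝ) (W0 : Matrix (Fin N) (Fin N) ℝ)
    (Θ : Fin K → Matrix (Fin d) (Fin d) ℝ) (Θ0 : Matrix (Fin d) (Fin d) ℝ)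
    (C1 lammax Cm : ℝ)
    (hWhigh : ∀ l : ℕ, 1 ≤ l → ∀ Y : Matrix (Fin N) (Fin d) ℝ,
      nrm (∑ r, W r l * Y * Θ r) ≤
        C1 * Cm * Real.sqrt lammax / Real.sqrt (2 ^ (l + 1)) * nrm Y)
    (hWlow : ∀ Y : Matrix (Fin N) (Fin d) ℝ,
      nrm (W0 * Y * Θ0) ≤ C1 * Cm * Real.sqrt lammax * nrm Y)
    (σ : ℝ → ℝ) (hσ : LipschitzWith 1 σ)
    (X Xt : ℕ → Matrix (Fin N) (Fin d) ℝ)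
    (hrecX : ∀ t, X (t + 1) = X t + Matrix.of (fun i j =>
      σ (((∑ r, ∑ l ∈ Finset.Icc 1 J, W r l * X t * Θ r) + W0 * X t * Θ0) i j)))
    (hrecXt : ∀ t, Xt (t + 1) = Xt t + Matrix.of (fun i j =>
      σ (((∑ r, ∑ l ∈ Finset.Icc 1 J, W r l * Xt t * Θ r) + W0 * Xt t * Θ0) i j))) :
    ∀ t : ℕ, nrm (X t - Xt t) ≤
      (1 + 4 * C1 * Real.sqrt lammax * Cm) ^ t * nrm (X 0 - Xt 0) := by
  obtain rfl : nrm = Norm.norm :=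
    funext fun Y => (hnrm Y).trans (Matrix.frobenius_norm_eq_sqrt Y).symm
  set T : Matrix (Fin N) (Fin d) ℝ → Matrix (Fin N) (Fin d) ℝ :=
    fun Y => (∑ r, ∑ l ∈ Icc 1 J, W r l * Y * Θ r) + W0 * Y * Θ0
  have hT_sub (A B) : T A - T B = T (A - B) := by
    simp only [T, Matrix.mul_sub, Matrix.sub_mul, sum_sub_distrib]
    abel
  have hT (Y) : ‖T Y‖ ≤ 3 * (C1 * Cm * √lammax * ‖Y‖) := by
    simp only [T]
    rw [sum_comm]
    exact norm_sum_Icc_add_le_three_mul (hWhigh · · Y) (hWlow Y)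
  have hlayer (A B) : ‖(T A).map σ - (T B).map σ‖ ≤ 4 * C1 * √lammax * Cm * ‖A - B‖ := by
    have hc : 0 ≤ C1 * Cm * √lammax * ‖A - B‖ := (norm_nonneg _).trans (hWlow (A - B))
    calc ‖(T A).map σ - (T B).map σ‖ ≤ ‖T A - T B‖ := by
          simpa using Matrix.frobenius_norm_map_sub_map_le hσ (T A) (T B)
      _ ≤ 3 * (C1 * Cm * √lammax * ‖A - B‖) := hT_sub A B ▸ hT (A - B)
      _ ≤ 4 * C1 * √lammax * Cm * ‖A - B‖ := by linarith
  exact norm_sub_le_pow_mul_of_add_lipschitz hlayer hrecX hrecXt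

/-- Stability of framelet message passing: for the update
`X^{(t)} = X^{(t−1)} + σ(Σ_{r,l} W_{r,l} X^{(t−1)} Θ_r + W_{0,J} X^{(t−1)} Θ_0)`
with `‖Θ_r‖ ≤ C_r`, `σ` 1-Lipschitz with `σ(0) = 0`, and the framelet operator
bounds `‖Σ_r W_{r,l} Y Θ_r‖ ≤ C₁ C_m √λ_max 2^{−(l+1)/2} ‖Y‖` and
`‖W_{0,J} Y Θ_0‖ ≤ C₁ C_m √λ_max ‖Y‖`, two trajectories satisfy
`‖X^{(t)} − X̃^{(t)}‖ ≤ C^t ‖X^{(0)} − X̃^{(0)}‖` with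
`C = 1 + 4 C₁ √λ_max · max_r C_r`. -/
theorem stmt_15 (N d K J : ℕ) (hJ : 1 ≤ J)
    (nrm : Matrix (Fin N) (Fin d) ℝ → ℝ)
    (hnrm : ∀ Y, nrm Y = Real.sqrt (∑ i, ∑ j, (Y i j) ^ 2))
    (W : Fin K → ℕ → Matrix (Fin N) (Fin N) ℝ) (W0 : Matrix (Fin N) (Fin N) ℝ)
    (Θ : Fin K → Matrix (Fin d) (Fin d) ℝ) (Θ0 : Matrix (Fin d) (Fin d) ℝ)
    (C : Fin K → ℝ) (C0 C1 lammax Cm : ℝ)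
    (hΘ : ∀ r (Y : Matrix (Fin N) (Fin d) ℝ), nrm (Y * Θ r) ≤ C r * nrm Y)
    (hΘ0 : ∀ Y : Matrix (Fin N) (Fin d) ℝ, nrm (Y * Θ0) ≤ C0 * nrm Y)
    (hCm : C0 ≤ Cm ∧ ∀ r, C r ≤ Cm)
    (hWhigh : ∀ l : ℕ, 1 ≤ l → ∀ Y : Matrix (Fin N) (Fin d) ℝ,
      nrm (∑ r, W r l * Y * Θ r) ≤
        C1 * Cm * Real.sqrt lammax / Real.sqrt (2 ^ (l + 1)) * nrm Y)
    (hWlow : ∀ Y : Matrix (Fin N) (Fin d) ℝ,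
      nrm (W0 * Y * Θ0) ≤ C1 * Cm * Real.sqrt lammax * nrm Y)
    (σ : ℝ → ℝ) (hσ : LipschitzWith 1 σ) (hσ0 : σ 0 = 0)
    (X Xt : ℕ → Matrix (Fin N) (Fin d) ℝ)
    (hrecX : ∀ t, X (t + 1) = X t + Matrix.of (fun i j =>
      σ (((∑ r, ∑ l ∈ Finset.Icc 1 J, W r l * X t * Θ r) + W0 * X t * Θ0) i j)))
    (hrecXt : ∀ t, Xt (t + 1) = Xt t + Matrix.of (fun i j =>
      σ (((∑ r, ∑ l ∈ Finset.Icc 1 J, W r l * Xt t * Θ r) + W0 * Xt t * Θ0) i j))) :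
    ∀ t : ℕ, nrm (X t - Xt t) ≤
      (1 + 4 * C1 * Real.sqrt lammax * Cm) ^ t * nrm (X 0 - Xt 0) :=
  stmt_15_general N d K J nrm hnrm W W0 Θ Θ0 C1 lammax Cm hWhigh hWlow σ hσ X Xt hrecX hrecXt
end
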